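/- arXiv:1004.0977 — 3 statements merged into one kernel-verified Lean document; each statement's English description precedes it below -/
import Mathlib

section
/- Let τ be any Borel probability measure on L = {1,...,K}^ℕ (with 2 ≤ K < ∞). For x ∈ L and n ≥ 1 define f_n(x) = −(1/n) log τ(C_{x|_n}), where x|_n is the initial segment of x of length n and C_{x|_n} ⊂ L is the cylinder set of sequences starting with x|_n. Then the function f̄ := sup_{n≥1} f_n is integrable with respect to τ, i.e. ∫_L f̄ dτ < ∞. -/
open MeasureTheory Filter Set
open scoped Classical ENNReal

/-!
If `τ` gives the cylinder of `x` of length `m` mass less than `ε`, then `x` lies in one of at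
most `K ^ m` cylinders of mass `< ε`, so `τ {x | τ (C_{x|m}) < ε} ≤ K ^ m ε`. Since
`f_n(x) > t` forces `τ (C_{x|n+1}) < e^{-(n+1)t}`, a union bound gives
`τ (f̄ > t) ≤ ∑ₙ (K e^{-t})^{n+1} ≤ 2 K e^{-t}`, and `∫ f̄ dτ ≤ ∑ⱼ τ (f̄ > j)` is finite.
-/

theorem measure_setOf_measure_fiber_lt_le {X W : Type*} [MeasurableSpace X] [Fintype W]
    (μ : Measure X) (π : X → W) (ε : ℝ≥0∞) :
    μ {x | μ (π ⁻¹' {π x}) < ε} ≤ Fintype.card W * ε := by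
  set small := Finset.univ.filter fun w => μ (π ⁻¹' {w}) < ε
  calc μ {x | μ (π ⁻¹' {π x}) < ε}
      ≤ μ (⋃ w ∈ small, π ⁻¹' {w}) :=
        measure_mono fun x hx => mem_biUnion (by simpa [small] using hx) rfl
    _ ≤ ∑ w ∈ small, μ (π ⁻¹' {w}) := measure_biUnion_finset_le _ _
    _ ≤ ∑ _w ∈ small, ε := Finset.sum_le_sum fun w hw => (Finset.mem_filter.1 hw).2.le
    _ ≤ ∑ _w : W, ε := Finset.sum_le_sum_of_subset (Finset.filter_subset _ _)
    _ = Fintype.card W * ε := by simp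

section Cylinder

variable {α : Type*}

theorem PiNat.cylinder_eq_setOf_forall_fin (x : ℕ → α) (n : ℕ) :
    PiNat.cylinder x n = {y | ∀ i : Fin n, y i = x i} := by
  ext y
  simp [mem_cylinder_iff, Fin.forall_iff]

theorem PiNat.cylinder_eq_preimage_restrict (x : ℕ → α) (n : ℕ) :
    PiNat.cylinder x n = (fun y (i : Fin n) => y i) ⁻¹' {fun i : Fin n => x i} := by
  ext y
  simp [cylinder_eq_setOf_forall_fin, funext_iff]

theorem measure_setOf_measure_cylinder_lt_le [Fintype α] [MeasurableSpace α]
    (τ : Measure (ℕ → α)) (n : ℕ) (ε : ℝ≥0∞) :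
    τ {x | τ (PiNat.cylinder x n) < ε} ≤ Fintype.card α ^ n * ε := by
  simpa [← PiNat.cylinder_eq_preimage_restrict, Fintype.card_fun] using
    measure_setOf_measure_fiber_lt_le τ (fun y (i : Fin n) => y i) ε

theorem measurable_measure_cylinder [Countable α] [MeasurableSpace α]
    [MeasurableSingletonClass α] (τ : Measure (ℕ → α)) (n : ℕ) :
    Measurable fun x => τ (PiNat.cylinder x n) := by
  simp_rw [PiNat.cylinder_eq_preimage_restrict]
  exact (measurable_of_countable fun w => τ ((fun y (i : Fin n) => y i) ⁻¹' {w})).comp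
    (measurable_pi_lambda _ fun i => measurable_pi_apply _)

end Cylinder

noncomputable def normalizedInfo (m : ℝ) (c : ℝ≥0∞) : ℝ≥0∞ :=
  if c = 0 then ⊤ else ENNReal.ofReal (-(1 / m) * Real.log c.toReal)

theorem measurable_normalizedInfo (m : ℝ) : Measurable (normalizedInfo m) :=
  Measurable.ite (measurableSet_singleton 0) measurable_const (by fun_prop)

theorem lt_ofReal_exp_of_lt_normalizedInfo {m t : ℝ} {c : ℝ≥0∞} (hm : 0 < m)
    (hc : c ≠ ⊤) (h : ENNReal.ofReal t < normalizedInfo m c) :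
    c < ENNReal.ofReal (Real.exp (-(m * t))) := by
  by_cases hc0 : c = 0
  · simpa [hc0] using Real.exp_pos _
  rw [normalizedInfo, if_neg hc0, ENNReal.ofReal_lt_ofReal_iff'] at h
  have hlog : Real.log c.toReal < -(m * t) := by
    have := mul_lt_mul_of_pos_left h.1 hm
    field_simp at this
    linarith
  rw [ENNReal.lt_ofReal_iff_toReal_lt hc]
  exact (Real.log_lt_iff_lt_exp (ENNReal.toReal_pos hc0 hc)).1 hlog

theorem ENNReal.tsum_pow_succ_le_two_mul {q : ℝ≥0∞} (hq : q ≤ 2⁻¹) :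
    ∑' n : ℕ, q ^ (n + 1) ≤ 2 * q := by
  have hq1 : q < 1 := hq.trans_lt (by norm_num)
  simp_rw [pow_succ', ENNReal.tsum_mul_left, ENNReal.tsum_geometric, mul_comm (2 : ℝ≥0∞)]
  gcongr
  rw [ENNReal.inv_le_iff_inv_le]
  refine ENNReal.le_sub_of_add_le_right (ne_top_of_lt hq1) ?_
  calc 2⁻¹ + q ≤ 2⁻¹ + 2⁻¹ := by gcongr
    _ = 1 := ENNReal.inv_two_add_inv_two

theorem ENNReal.le_tsum_ite_natCast_lt (a : ℝ≥0∞) :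
    a ≤ ∑' j : ℕ, if (j : ℝ≥0∞) < a then 1 else 0 := by
  rcases eq_or_ne a ⊤ with rfl | ha
  · simp
  have hex : ∃ n : ℕ, a ≤ n := (ENNReal.exists_nat_gt ha).imp fun _ => le_of_lt
  calc a ≤ Nat.find hex := Nat.find_spec hex
    _ = ∑ j ∈ Finset.range (Nat.find hex), if (j : ℝ≥0∞) < a then 1 else 0 := by
        rw [Finset.sum_congr rfl fun j hj =>
          if_pos (not_le.1 (Nat.find_min hex (Finset.mem_range.1 hj)))]
        simp
    _ ≤ _ := ENNReal.sum_le_tsum _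

theorem lintegral_le_tsum_measure_natCast_lt {X : Type*} [MeasurableSpace X] {μ : Measure X}
    {f : X → ℝ≥0∞} (hf : Measurable f) :
    ∫⁻ x, f x ∂μ ≤ ∑' j : ℕ, μ {x | (j : ℝ≥0∞) < f x} := by
  have hmeas (j : ℕ) : MeasurableSet {x | (j : ℝ≥0∞) < f x} :=
    measurableSet_lt measurable_const hf
  calc ∫⁻ x, f x ∂μ
      ≤ ∫⁻ x, ∑' j : ℕ, {x | (j : ℝ≥0∞) < f x}.indicator 1 x ∂μ := by
        refine lintegral_mono fun x => (ENNReal.le_tsum_ite_natCast_lt (f x)).trans_eq ?_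
        simp [Set.indicator_apply]
    _ = ∑' j : ℕ, μ {x | (j : ℝ≥0∞) < f x} := by
        rw [lintegral_tsum fun j => (measurable_one.indicator (hmeas j)).aemeasurable]
        simp_rw [lintegral_indicator_one (hmeas _)]

section MaximalInfo

variable {α : Type*} [Fintype α] [MeasurableSpace α]

/-- The paper's `f̄ = sup_{n ≥ 1} f_n`, with the index shifted by one. -/
noncomputable def maximalInfo (τ : Measure (ℕ → α)) (x : ℕ → α) : ℝ≥0∞ :=
  ⨆ n : ℕ, normalizedInfo ((n : ℝ) + 1) (τ (PiNat.cylinder x (n + 1)))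

theorem measurable_maximalInfo [MeasurableSingletonClass α] (τ : Measure (ℕ → α)) :
    Measurable (maximalInfo τ) :=
  Measurable.iSup fun _ => (measurable_normalizedInfo _).comp (measurable_measure_cylinder τ _)

theorem measure_natCast_lt_normalizedInfo_le (τ : Measure (ℕ → α)) [IsFiniteMeasure τ]
    (n j : ℕ) :
    τ {x | (j : ℝ≥0∞) < normalizedInfo ((n : ℝ) + 1) (τ (PiNat.cylinder x (n + 1)))}
      ≤ (Fintype.card α * ENNReal.ofReal (Real.exp (-j))) ^ (n + 1) := by
  have hsub : {x | (j : ℝ≥0∞) < normalizedInfo ((n : ℝ) + 1) (τ (PiNat.cylinder x (n + 1)))} ⊆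
      {x | τ (PiNat.cylinder x (n + 1)) < ENNReal.ofReal (Real.exp (-(((n : ℝ) + 1) * j)))} :=
    fun x hx => lt_ofReal_exp_of_lt_normalizedInfo (by positivity) (measure_ne_top _ _)
      (by simpa using hx)
  refine (measure_mono hsub).trans <| (measure_setOf_measure_cylinder_lt_le τ _ _).trans_eq ?_
  rw [mul_pow, ← ENNReal.ofReal_pow (Real.exp_nonneg _), ← Real.exp_nat_mul]
  push_cast
  ring_nf

theorem measure_natCast_lt_maximalInfo_le (τ : Measure (ℕ → α)) [IsProbabilityMeasure τ]
    (j : ℕ) :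
    τ {x | (j : ℝ≥0∞) < maximalInfo τ x}
      ≤ 2 * Fintype.card α * ENNReal.ofReal (Real.exp (-j)) := by
  set q := (Fintype.card α : ℝ≥0∞) * ENNReal.ofReal (Real.exp (-j))
  rw [mul_assoc]
  by_cases hq : q ≤ 2⁻¹
  · calc τ {x | (j : ℝ≥0∞) < maximalInfo τ x}
        = τ (⋃ n : ℕ,
            {x | (j : ℝ≥0∞) < normalizedInfo ((n : ℝ) + 1) (τ (PiNat.cylinder x (n + 1)))}) := by
          simp only [maximalInfo, lt_iSup_iff, ofPred_exists]
      _ ≤ ∑' n : ℕ, q ^ (n + 1) :=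
          (measure_iUnion_le _).trans
            (ENNReal.tsum_le_tsum (measure_natCast_lt_normalizedInfo_le τ · j))
      _ ≤ 2 * q := ENNReal.tsum_pow_succ_le_two_mul hq
  · -- here the bound exceeds `1`, the total mass
    refine prob_le_one.trans ?_
    calc (1 : ℝ≥0∞) = 2⁻¹ * 2 := (ENNReal.inv_mul_cancel two_ne_zero ENNReal.ofNat_ne_top).symm
      _ ≤ q * 2 := by gcongr; exact (not_le.1 hq).le
      _ = 2 * q := mul_comm _ _

theorem lintegral_maximalInfo_lt_top [MeasurableSingletonClass α] (τ : Measure (ℕ → α))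
    [IsProbabilityMeasure τ] : ∫⁻ x, maximalInfo τ x ∂τ < ⊤ := by
  have hexp : ∑' j : ℕ, ENNReal.ofReal (Real.exp (-j)) ≠ ⊤ := by
    rw [← ENNReal.ofReal_tsum_of_nonneg (fun _ => Real.exp_nonneg _) Real.summable_exp_neg_nat]
    exact ENNReal.ofReal_ne_top
  calc ∫⁻ x, maximalInfo τ x ∂τ
      ≤ ∑' j : ℕ, τ {x | (j : ℝ≥0∞) < maximalInfo τ x} :=
        lintegral_le_tsum_measure_natCast_lt (measurable_maximalInfo τ)
    _ ≤ ∑' j : ℕ, 2 * Fintype.card α * ENNReal.ofReal (Real.exp (-j)) :=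
        ENNReal.tsum_le_tsum (measure_natCast_lt_maximalInfo_le τ)
    _ < ⊤ := by
        rw [ENNReal.tsum_mul_left]
        exact ENNReal.mul_lt_top (by finiteness) hexp.lt_top

end MaximalInfo

theorem sup_entropy_integrable_general
    (K : ℕ)
    (τ : Measure (ℕ → Fin K)) [IsProbabilityMeasure τ] :
    ∫⁻ x, (⨆ n : ℕ,
        if τ {y : ℕ → Fin K | ∀ i : Fin (n + 1), y i = x i} = 0 then (⊤ : ℝ≥0∞)
        else ENNReal.ofReal (-(1 / ((n : ℝ) + 1)) *
          Real.log (τ {y : ℕ → Fin K | ∀ i : Fin (n + 1), y i = x i}).toReal)) ∂τ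
      < ⊤ := by
  simpa only [maximalInfo, normalizedInfo, PiNat.cylinder_eq_setOf_forall_fin] using
    lintegral_maximalInfo_lt_top τ

/-- For any Borel probability measure `τ` on `L = {1,…,K}^ℕ` (with
`2 ≤ K < ∞`), setting `f_n(x) = −(1/n) log τ(C_{x|_n})` (valued in `[0,∞]`, equal to
`+∞` when the cylinder is null), the function `f̄ = sup_{n ≥ 1} f_n` is integrable with
respect to `τ`, i.e. `∫ f̄ dτ < ∞`. -/
theorem sup_entropy_integrable
    (K : ℕ) (hK : 2 ≤ K)
    (τ : Measure (ℕ → Fin K)) [IsProbabilityMeasure τ] :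
    ∫⁻ x, (⨆ n : ℕ,
        if τ {y : ℕ → Fin K | ∀ i : Fin (n + 1), y i = x i} = 0 then (⊤ : ℝ≥0∞)
        else ENNReal.ofReal (-(1 / ((n : ℝ) + 1)) *
          Real.log (τ {y : ℕ → Fin K | ∀ i : Fin (n + 1), y i = x i}).toReal)) ∂τ
      < ⊤ :=
  sup_entropy_integrable_general K τ
end

section
/- Weak law of large numbers with arbitrary weights: let ν₀ be a Borel probability measure on ℝ with finite expectation m. Let (p^n)_{n≥1} be a proper sequence of probability vectors, i.e. each p^n = (p^n_1,...,p^n_{N_n}) has nonnegative entries summing to 1 and max{p^n_j : 1 ≤ j ≤ N_n} → 0 as n → ∞. For each n, let Z_1,...,Z_{N_n} be independent random variables each with law ν₀, and let ν_n be the law of Σ_{j=1}^{N_n} p^n_j Z_j. Then ν_n converges weakly to the Dirac measure at m. -/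
/-!
Write `Sₙ = ∑ⱼ pⁿⱼ Zⱼ` and truncate the identity: `t = φ(t) + (t - φ(t))` with `φ` bounded. Since
the weights are nonnegative with sum `1`, the part `∑ⱼ pⁿⱼ (Zⱼ - φ(Zⱼ))` has `L¹` norm at most
`𝔼|Z - φ(Z)|`, uniformly in `n`, and this is small for a high truncation level. The part
`∑ⱼ pⁿⱼ φ(Zⱼ)` has variance `(∑ⱼ (pⁿⱼ)²) Var φ(Z) ≤ (maxⱼ pⁿⱼ) Var φ(Z) → 0`. Hence `Sₙ → m` in
`L¹`, and convergence in mean to a constant implies weak convergence to the Dirac mass.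
-/

open MeasureTheory Filter Set ProbabilityTheory Topology

section Moments

variable {Ω : Type*} [MeasurableSpace Ω] {μ : Measure Ω} [IsProbabilityMeasure μ] {X : Ω → ℝ}

lemma sq_integral_abs_le_integral_sq (hX : MemLp X 2 μ) :
    (∫ ω, |X ω| ∂μ) ^ 2 ≤ ∫ ω, X ω ^ 2 ∂μ := by
  have h := variance_eq_sub hX.abs
  simp only [Pi.pow_apply, Pi.abs_apply, sq_abs] at h
  linarith [variance_nonneg |X| μ]

lemma integral_abs_sub_integral_le_sqrt_variance (hX : MemLp X 2 μ) :
    ∫ ω, |X ω - μ[X]| ∂μ ≤ √(Var[X; μ]) := by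
  rw [variance_eq_integral hX.aemeasurable]
  exact Real.le_sqrt_of_sq_le (sq_integral_abs_le_integral_sq (hX.sub (memLp_const _)))

end Moments

lemma tendsto_integral_abs_sub_truncation {Ω : Type*} [MeasurableSpace Ω] {μ : Measure Ω}
    {X : Ω → ℝ} (hX : Integrable X μ) :
    Tendsto (fun A => ∫ ω, |X ω - truncation X A ω| ∂μ) atTop (𝓝 0) := by
  have h := tendsto_integral_filter_of_dominated_convergence (μ := μ) (l := atTop)
    (F := fun A ω => |X ω - truncation X A ω|) (f := fun _ => 0) (fun ω => |X ω|)
    (.of_forall fun A =>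
      continuous_abs.comp_aestronglyMeasurable
        (hX.aestronglyMeasurable.sub hX.aestronglyMeasurable.truncation))
    (.of_forall fun A => .of_forall fun ω => by
      simp only [truncation, indicator, Function.comp_apply, id, Real.norm_eq_abs, abs_abs]
      split_ifs <;> simp)
    hX.abs
    (.of_forall fun ω => tendsto_const_nhds.congr' <| by
      filter_upwards [Ioi_mem_atTop |X ω|] with A hA
      rw [truncation_eq_self hA, sub_self, abs_zero])
  simpa using h

section WeightedSum

variable {ι α : Type*} [Fintype ι] [MeasurableSpace α] {ν : Measure α} [IsProbabilityMeasure ν]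
  (q : ι → ℝ) {f : α → ℝ}

lemma integrable_weighted_sum_pi (hf : Integrable f ν) :
    Integrable (fun z : ι → α => ∑ i, q i * f (z i)) (Measure.pi fun _ => ν) :=
  integrable_finsetSum _ fun _ _ => (integrable_comp_eval hf).const_mul _

lemma integral_weighted_sum_pi (hf : Integrable f ν) :
    ∫ z, ∑ i, q i * f (z i) ∂(Measure.pi fun _ : ι => ν) = (∑ i, q i) * ∫ x, f x ∂ν := by
  rw [integral_finsetSum _ fun _ _ => (integrable_comp_eval hf).const_mul _, Finset.sum_mul]
  simp_rw [integral_const_mul, integral_comp_eval (μ := fun _ : ι => ν) hf.aestronglyMeasurable]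

lemma memLp_weighted_sum_pi (hf : MemLp f 2 ν) :
    MemLp (fun z : ι → α => ∑ i, q i * f (z i)) 2 (Measure.pi fun _ => ν) := by
  simpa [← Finset.sum_fn] using memLp_finsetSum' Finset.univ fun i _ =>
    (hf.comp_measurePreserving (measurePreserving_eval _ i)).const_mul (q i)

lemma variance_weighted_sum_pi (hf : MemLp f 2 ν) :
    Var[fun z : ι → α => ∑ i, q i * f (z i); Measure.pi fun _ => ν]
      = (∑ i, q i ^ 2) * Var[f; ν] := by
  have h := variance_sum_pi (μ := fun _ : ι => ν) (X := fun i x => q i * f x)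
    fun i => hf.const_mul _
  simp_rw [variance_const_mul, Finset.sum_fn] at h
  rw [h, Finset.sum_mul]

lemma integral_abs_weighted_sum_pi_le (hq : ∀ i, 0 ≤ q i) (hf : Integrable f ν) :
    ∫ z, |∑ i, q i * f (z i)| ∂(Measure.pi fun _ : ι => ν) ≤ (∑ i, q i) * ∫ x, |f x| ∂ν := by
  rw [← integral_weighted_sum_pi q hf.abs]
  refine integral_mono (integrable_weighted_sum_pi q hf).abs
    (integrable_weighted_sum_pi q hf.abs) fun z => ?_
  calc |∑ i, q i * f (z i)| ≤ ∑ i, |q i * f (z i)| := Finset.abs_sum_le_sum_abs _ _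
    _ = ∑ i, q i * |f (z i)| := by simp_rw [abs_mul, abs_of_nonneg (hq _)]

lemma integral_abs_weighted_sum_pi_sub_le (hq0 : ∀ i, 0 ≤ q i) (hq1 : ∑ i, q i = 1)
    (hf : Integrable f ν) {φ : α → ℝ} (hφ : MemLp φ 2 ν) :
    ∫ z, |∑ i, q i * f (z i) - ∫ x, f x ∂ν| ∂(Measure.pi fun _ : ι => ν)
      ≤ 2 * ∫ x, |f x - φ x| ∂ν + √((∑ i, q i ^ 2) * Var[φ; ν]) := by
  have hφi : Integrable φ ν := hφ.integrable one_le_two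
  have hfφ : Integrable (fun x => f x - φ x) ν := hf.sub hφi
  set μ := Measure.pi fun _ : ι => ν
  set W := fun z : ι → α => ∑ i, q i * φ (z i)
  have hW : MemLp W 2 μ := memLp_weighted_sum_pi q hφ
  have hWi : Integrable W μ := hW.integrable one_le_two
  have hWmean : μ[W] = ∫ x, φ x ∂ν := by
    rw [integral_weighted_sum_pi q hφi, hq1, one_mul]
  have hsplit : ∀ z, ∑ i, q i * f (z i) - ∫ x, f x ∂ν
      = ∑ i, q i * (f (z i) - φ (z i)) + (W z - μ[W]) - ∫ x, f x - φ x ∂ν := by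
    intro z
    rw [hWmean, integral_sub hf hφi]
    simp only [W, mul_sub, Finset.sum_sub_distrib]
    ring
  have hR : Integrable (fun z => |∑ i, q i * (f (z i) - φ (z i))|) μ :=
    (integrable_weighted_sum_pi q hfφ).abs
  have hW' : Integrable (fun z => |W z - μ[W]|) μ := (hWi.sub (integrable_const _)).abs
  calc ∫ z, |∑ i, q i * f (z i) - ∫ x, f x ∂ν| ∂μ
      ≤ ∫ z, (|∑ i, q i * (f (z i) - φ (z i))| + |W z - μ[W]| + |∫ x, f x - φ x ∂ν|) ∂μ := by
        refine integral_mono ((integrable_weighted_sum_pi q hf).sub (integrable_const _)).abs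
          ((hR.add hW').add (integrable_const _)) fun z => ?_
        rw [hsplit]
        exact (abs_sub _ _).trans (by gcongr; exact abs_add_le _ _)
    _ = ∫ z, |∑ i, q i * (f (z i) - φ (z i))| ∂μ + ∫ z, |W z - μ[W]| ∂μ
          + |∫ x, f x - φ x ∂ν| := by
        rw [integral_add (f := fun z => |∑ i, q i * (f (z i) - φ (z i))| + |W z - μ[W]|)
          (hR.add hW') (integrable_const _), integral_add hR hW']
        simp
    _ ≤ ∫ x, |f x - φ x| ∂ν + √(Var[W; μ]) + ∫ x, |f x - φ x| ∂ν := by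
        gcongr
        · simpa [hq1] using integral_abs_weighted_sum_pi_le q hq0 hfφ
        · exact integral_abs_sub_integral_le_sqrt_variance hW
        · exact abs_integral_le_integral_abs
    _ = 2 * ∫ x, |f x - φ x| ∂ν + √((∑ i, q i ^ 2) * Var[φ; ν]) := by
        rw [variance_weighted_sum_pi q hφ]
        ring

end WeightedSum

section Asymptotics

variable {κ : Type*} {l : Filter κ}

lemma tendsto_sum_sq_of_forall_le {ι : κ → Type*} [∀ k, Fintype (ι k)] {q : ∀ k, ι k → ℝ}
    (hq0 : ∀ k i, 0 ≤ q k i) (hq1 : ∀ k, ∑ i, q k i = 1)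
    (hqmax : ∀ ε > 0, ∀ᶠ k in l, ∀ i, q k i ≤ ε) :
    Tendsto (fun k => ∑ i, q k i ^ 2) l (𝓝 0) := by
  refine tendsto_order.2 ⟨fun a ha => .of_forall fun k => ha.trans_le <| by positivity,
    fun a ha => ?_⟩
  filter_upwards [hqmax (a / 2) (half_pos ha)] with k hk
  calc ∑ i, q k i ^ 2 ≤ ∑ i, q k i * (a / 2) :=
        Finset.sum_le_sum fun i _ => by rw [sq]; exact mul_le_mul_of_nonneg_left (hk i) (hq0 k i)
    _ = a / 2 := by rw [← Finset.sum_mul, hq1, one_mul]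
    _ < a := half_lt_self ha

lemma tendsto_integral_abs_weighted_sum_pi_sub {ι : κ → Type*} [∀ k, Fintype (ι k)]
    {α : Type*} [MeasurableSpace α] {ν : Measure α} [IsProbabilityMeasure ν] {f : α → ℝ}
    (hf : Integrable f ν) {q : ∀ k, ι k → ℝ}
    (hq0 : ∀ k i, 0 ≤ q k i) (hq1 : ∀ k, ∑ i, q k i = 1)
    (hqmax : ∀ ε > 0, ∀ᶠ k in l, ∀ i, q k i ≤ ε) :
    Tendsto (fun k => ∫ z, |∑ i, q k i * f (z i) - ∫ x, f x ∂ν| ∂(Measure.pi fun _ : ι k => ν))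
      l (𝓝 0) := by
  refine tendsto_order.2 ⟨fun a ha => .of_forall fun k => ha.trans_le <| by positivity,
    fun ε hε => ?_⟩
  obtain ⟨A, hA⟩ := ((tendsto_integral_abs_sub_truncation hf).eventually
    (gt_mem_nhds (show 0 < ε / 2 by positivity))).exists
  set φ := truncation f A
  have hbound : Tendsto (fun k => 2 * ∫ x, |f x - φ x| ∂ν + √((∑ i, q k i ^ 2) * Var[φ; ν])) l
      (𝓝 (2 * ∫ x, |f x - φ x| ∂ν)) := by
    simpa using tendsto_const_nhds.add
      (((tendsto_sum_sq_of_forall_le hq0 hq1 hqmax).mul_const Var[φ; ν]).sqrt)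
  filter_upwards [hbound.eventually (gt_mem_nhds (show _ < ε by linarith))] with k hk
  exact (integral_abs_weighted_sum_pi_sub_le (q k) (hq0 k) (hq1 k) hf
    hf.aestronglyMeasurable.memLp_truncation).trans_lt hk

end Asymptotics

lemma tendsto_integral_comp_of_tendsto_integral_dist {κ : Type*} {l : Filter κ}
    {Ω : κ → Type*} [∀ k, MeasurableSpace (Ω k)] {μ : ∀ k, Measure (Ω k)}
    [∀ k, IsProbabilityMeasure (μ k)] {E : Type*} [PseudoMetricSpace E] [MeasurableSpace E]
    {X : ∀ k, Ω k → E} {m : E} (hX : ∀ k, AEMeasurable (X k) (μ k))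
    (hXi : ∀ k, Integrable (fun ω => dist (X k ω) m) (μ k))
    (hXm : Tendsto (fun k => ∫ ω, dist (X k ω) m ∂μ k) l (𝓝 0))
    {g : E → ℝ} (hgm : Measurable g) (hgc : ContinuousAt g m) (hgb : ∃ C, ∀ x, |g x| ≤ C) :
    Tendsto (fun k => ∫ ω, g (X k ω) ∂μ k) l (𝓝 (g m)) := by
  obtain ⟨C, hC⟩ := hgb
  rw [Metric.tendsto_nhds]
  intro ε hε
  obtain ⟨δ, hδ, hgδ⟩ := Metric.continuousAt_iff.mp hgc (ε / 2) (half_pos hε)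
  have hC0 : 0 ≤ C := (abs_nonneg _).trans (hC m)
  -- Near `m` use continuity; at distance `≥ δ`, `|g x - g m| ≤ 2C ≤ (2C/δ) dist x m`.
  have hpt : ∀ x, |g x - g m| ≤ ε / 2 + 2 * C / δ * dist x m := by
    intro x
    rcases lt_or_ge (dist x m) δ with hx | hx
    · have := hgδ hx
      rw [Real.dist_eq] at this
      have : 0 ≤ 2 * C / δ * dist x m := by positivity
      linarith
    · have h1 : |g x - g m| ≤ 2 * C := (abs_sub _ _).trans (by linarith [hC x, hC m])
      have h2 : 2 * C ≤ 2 * C / δ * dist x m := by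
        rw [div_mul_eq_mul_div, le_div_iff₀ hδ]
        exact mul_le_mul_of_nonneg_left hx (by positivity)
      linarith
  have hbound : Tendsto (fun k => ε / 2 + 2 * C / δ * ∫ ω, dist (X k ω) m ∂μ k) l (𝓝 (ε / 2)) := by
    simpa using tendsto_const_nhds.add (hXm.const_mul (2 * C / δ))
  filter_upwards [hbound.eventually (gt_mem_nhds (half_lt_self hε))] with k hk
  have hgi : Integrable (fun ω => g (X k ω)) (μ k) :=
    .of_bound (hgm.comp_aemeasurable (hX k)).aestronglyMeasurable C (.of_forall fun ω => hC _)
  rw [Real.dist_eq]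
  calc |∫ ω, g (X k ω) ∂μ k - g m| = |∫ ω, (g (X k ω) - g m) ∂μ k| := by
        rw [integral_sub hgi (integrable_const _), integral_const]
        simp
    _ ≤ ∫ ω, |g (X k ω) - g m| ∂μ k := abs_integral_le_integral_abs
    _ ≤ ∫ ω, (ε / 2 + 2 * C / δ * dist (X k ω) m) ∂μ k :=
        integral_mono (hgi.sub (integrable_const _)).abs
          ((integrable_const _).add ((hXi k).const_mul _)) fun ω => hpt _
    _ = ε / 2 + 2 * C / δ * ∫ ω, dist (X k ω) m ∂μ k := by
        rw [integral_add (integrable_const _) ((hXi k).const_mul _), integral_const_mul]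
        simp
    _ < ε := hk

/-- Weak law of large numbers with arbitrary weights: if `ν₀` is a Borel
probability measure on `ℝ` with expectation `m`, and `(p^n)` is a proper sequence of
probability vectors (maximal entry tending to `0`), then the law `ν_n` of
`∑_j p^n_j Z_j` — where `Z_1, …, Z_{N_n}` are i.i.d. with law `ν₀`, so that `ν_n` is the
pushforward of the product measure `ν₀^{N_n}` — converges weakly to the Dirac measure at
`m`: the integral of every bounded continuous function converges to its value at `m`. -/
theorem weighted_weak_law_of_large_numbers
    (ν₀ : Measure ℝ) [IsProbabilityMeasure ν₀]
    (m : ℝ) (hint : Integrable (fun t : ℝ => t) ν₀) (hm : ∫ t, t ∂ν₀ = m)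
    (N : ℕ → ℕ) (p : ∀ n : ℕ, Fin (N n) → ℝ)
    (hp0 : ∀ n j, 0 ≤ p n j) (hp1 : ∀ n, ∑ j, p n j = 1)
    (hpmax : ∀ ε > 0, ∀ᶠ n in atTop, ∀ j, p n j ≤ ε)
    (g : ℝ → ℝ) (hgc : Continuous g) (hgb : ∃ C, ∀ t, |g t| ≤ C) :
    Tendsto
      (fun n => ∫ z, g (∑ j, p n j * z j) ∂(Measure.pi fun _ : Fin (N n) => ν₀))
      atTop (nhds (g m)) := by
  have hS : ∀ n, Integrable (fun z : Fin (N n) → ℝ => ∑ j, p n j * z j)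
      (Measure.pi fun _ => ν₀) :=
    fun n => integrable_weighted_sum_pi (p n) hint
  have hL1 := tendsto_integral_abs_weighted_sum_pi_sub (ι := fun n => Fin (N n)) hint hp0 hp1 hpmax
  rw [hm] at hL1
  have hdist : ∀ n, Integrable (fun z : Fin (N n) → ℝ => dist (∑ j, p n j * z j) m)
      (Measure.pi fun _ => ν₀) := fun n => by
    simpa only [Real.dist_eq, Pi.sub_apply] using ((hS n).sub (integrable_const m)).abs
  exact tendsto_integral_comp_of_tendsto_integral_dist (fun n => (hS n).aemeasurable) hdist
    (by simpa only [Real.dist_eq] using hL1) hgc.measurable hgc.continuousAt hgb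
end

section
/- Let σ be an exponential random variable with rate r > 0, let λ > 0, and let Y be a random variable independent of σ with P(Y > 0) = 1. Then the law of the product e^{−λσ} Y is absolutely continuous with respect to Lebesgue measure on ℝ. -/
open MeasureTheory ProbabilityTheory Filter Real Set

/-!
For a fixed `y > 0` the map `x ↦ exp (-λ x) * y` has the differentiable left inverse
`u ↦ log (u / y) / (-λ)`, so it pulls Lebesgue-null sets back to null sets; since the law of `σ`
has a density, each conditional law of the product given `Y = y` is absolutely continuous. By
independence the law of the product is the mixture of these over the law of `Y`.
-/

namespace MeasureTheory.Measure

theorem map_prod_absolutelyContinuous_of_ae_map {α β γ : Type*} [MeasurableSpace α]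
    [MeasurableSpace β] [MeasurableSpace γ] {μ : Measure α} {ν : Measure β} [SFinite μ]
    [SFinite ν] {ρ : Measure γ} {f : α → β → γ} (hf : Measurable (Function.uncurry f))
    (h : ∀ᵐ y ∂ν, μ.map (f · y) ≪ ρ) :
    (μ.prod ν).map (Function.uncurry f) ≪ ρ := by
  refine AbsolutelyContinuous.mk fun s hs hs0 => ?_
  rw [map_apply hf hs, prod_apply_symm (hf hs)]
  rw [lintegral_congr_ae (g := fun _ => 0) ?_, lintegral_zero]
  filter_upwards [h] with y hy
  have hfy : Measurable (f · y) := hf.comp (measurable_id.prodMk measurable_const)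
  exact (map_apply hfy hs).symm.trans (hy hs0)

theorem map_absolutelyContinuous_of_leftInverse {E : Type*} [NormedAddCommGroup E]
    [NormedSpace ℝ E] [FiniteDimensional ℝ E] [MeasurableSpace E] [BorelSpace E]
    (μ : Measure E) [μ.IsAddHaarMeasure] {f g : E → E} (hf : Measurable f)
    (hgf : Function.LeftInverse g f) (hg : DifferentiableOn ℝ g (range f)) :
    μ.map f ≪ μ := by
  refine AbsolutelyContinuous.mk fun s hs hs0 => ?_
  rw [map_apply hf hs]
  have hsub : f ⁻¹' s ⊆ g '' (s ∩ range f) := fun x hx => ⟨f x, ⟨hx, x, rfl⟩, hgf x⟩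
  exact measure_mono_null hsub <| addHaar_image_eq_zero_of_differentiableOn_of_addHaar_eq_zero μ
    (hg.mono inter_subset_right) (measure_mono_null inter_subset_left hs0)

end MeasureTheory.Measure

theorem Real.map_volume_exp_mul_mul_absolutelyContinuous {a c : ℝ} (ha : a ≠ 0) (hc : c ≠ 0) :
    volume.map (fun x => exp (a * x) * c) ≪ volume := by
  refine Measure.map_absolutelyContinuous_of_leftInverse volume (g := fun u => log (u / c) / a)
    (by fun_prop) (fun x => by simp [hc, ha]) ?_
  rintro _ ⟨x, rfl⟩
  have hx : exp (a * x) * c / c ≠ 0 := by positivity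
  have hg : DifferentiableAt ℝ (fun u => log (u / c) / a) (exp (a * x) * c) := by
    fun_prop (disch := exact hx)
  exact hg.differentiableWithinAt

theorem exp_neg_lambda_mul_indep_absolutely_continuous_general
    {Ω : Type*} [MeasurableSpace Ω] (P : Measure Ω) [IsProbabilityMeasure P]
    (r : ℝ) (lam : ℝ) (hlam : 0 < lam)
    (σ : Ω → ℝ) (hσmeas : Measurable σ) (hσdist : P.map σ = expMeasure r)
    (Y : Ω → ℝ) (hYmeas : Measurable Y) (hYpos : ∀ᵐ ω ∂P, 0 < Y ω)
    (hindep : IndepFun σ Y P) :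
    P.map (fun ω => Real.exp (-lam * σ ω) * Y ω) ≪ volume := by
  set f : ℝ → ℝ → ℝ := fun x y => exp (-lam * x) * y
  have hf : Measurable (Function.uncurry f) := by fun_prop
  have hlaw : P.map (fun ω => exp (-lam * σ ω) * Y ω)
      = ((P.map σ).prod (P.map Y)).map (Function.uncurry f) := by
    rw [← (indepFun_iff_map_prod_eq_prod_map_map hσmeas.aemeasurable
      hYmeas.aemeasurable).mp hindep, Measure.map_map hf (hσmeas.prodMk hYmeas)]
    rfl
  have hσac : P.map σ ≪ volume := hσdist ▸ withDensity_absolutelyContinuous _ _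
  have hYlaw_pos : ∀ᵐ y ∂P.map Y, 0 < y :=
    (ae_map_iff hYmeas.aemeasurable measurableSet_Ioi).mpr hYpos
  rw [hlaw]
  refine Measure.map_prod_absolutelyContinuous_of_ae_map hf ?_
  filter_upwards [hYlaw_pos] with y hy
  exact (hσac.map (by fun_prop)).trans
    (map_volume_exp_mul_mul_absolutelyContinuous (neg_ne_zero.mpr hlam.ne') hy.ne')

/-- If `σ` is exponential with rate `r > 0`, `λ > 0`, and `Y` is a
random variable independent of `σ` with `P(Y > 0) = 1`, then the law of the product
`exp (−λσ) · Y` is absolutely continuous with respect to Lebesgue measure on `ℝ`. -/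
theorem exp_neg_lambda_mul_indep_absolutely_continuous
    {Ω : Type*} [MeasurableSpace Ω] (P : Measure Ω) [IsProbabilityMeasure P]
    (r : ℝ) (hr : 0 < r) (lam : ℝ) (hlam : 0 < lam)
    (σ : Ω → ℝ) (hσmeas : Measurable σ) (hσdist : P.map σ = expMeasure r)
    (Y : Ω → ℝ) (hYmeas : Measurable Y) (hYpos : ∀ᵐ ω ∂P, 0 < Y ω)
    (hindep : IndepFun σ Y P) :
    P.map (fun ω => Real.exp (-lam * σ ω) * Y ω) ≪ volume :=
  exp_neg_lambda_mul_indep_absolutely_continuous_general P r lam hlam σ hσmeas hσdist Y hYmeas hYpos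
    hindep
end
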